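/- If φ : [t₀,∞) → ℝⁿ is both stationary with limit matrix Λ and persistently exciting with lower bound α > 0, then Λ is positive definite, with Λ ≥ αIₙ in the Loewner order. -/

import Mathlib

open Real Filter MeasureTheory intervalIntegral Matrix

private lemma qf_eq {n : ℕ} (M : Matrix (Fin n) (Fin n) ℝ) (x : Fin n → ℝ) :
    dotProduct x (M *ᵥ x) = ∑ i, ∑ j, x i * M i j * x j := by
  simp [dotProduct, Matrix.mulVec, Finset.mul_sum, mul_assoc]

private lemma sum_comm3 {α : Type*} [AddCommMonoid α] {k n : ℕ}
    (f : ℕ → Fin n → Fin n → α) :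
    ∑ i : Fin n, ∑ j : Fin n, ∑ m ∈ Finset.range k, f m i j
      = ∑ m ∈ Finset.range k, ∑ i : Fin n, ∑ j : Fin n, f m i j := by
  calc ∑ i : Fin n, ∑ j : Fin n, ∑ m ∈ Finset.range k, f m i j
      = ∑ i : Fin n, ∑ m ∈ Finset.range k, ∑ j : Fin n, f m i j :=
        Finset.sum_congr rfl fun i _ => Finset.sum_comm
    _ = ∑ m ∈ Finset.range k, ∑ i : Fin n, ∑ j : Fin n, f m i j := Finset.sum_comm

/-- A stationary and persistently exciting regressor has a
positive definite autocovariance limit Λ, with Λ ≥ αIₙ in the Loewner order. -/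
theorem stationary_PE_limit_posdef
    (n : ℕ) (t₀ T₀ αl αu : ℝ) (φ : ℝ → Fin n → ℝ)
    (Λ : Matrix (Fin n) (Fin n) ℝ)
    (hT₀ : 0 < T₀) (hαl : 0 < αl) (hle : αl ≤ αu)
    (hInt : ∀ i j : Fin n, ∀ a b : ℝ,
      IntervalIntegrable (fun τ => φ τ i * φ τ j) MeasureTheory.volume a b)
    (hST : ∀ t : ℝ, ∀ i j : Fin n,
      Tendsto (fun T : ℝ => (1 / T) * ∫ τ in t..(t + T), φ τ i * φ τ j)
        atTop (nhds (Λ i j)))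
    (hPE : ∀ t : ℝ, t₀ ≤ t →
      (Matrix.PosSemidef (αu • (1 : Matrix (Fin n) (Fin n) ℝ) -
        Matrix.of fun i j => (1 / T₀) * ∫ τ in t..(t + T₀), φ τ i * φ τ j)) ∧
      (Matrix.PosSemidef ((Matrix.of fun i j =>
        (1 / T₀) * ∫ τ in t..(t + T₀), φ τ i * φ τ j) -
          αl • (1 : Matrix (Fin n) (Fin n) ℝ)))) :
    Matrix.PosSemidef (Λ - αl • (1 : Matrix (Fin n) (Fin n) ℝ)) ∧
      Matrix.PosDef Λ := by
  -- symmetry of Λ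
  have hsym : Λ.IsHermitian := by
    ext i j
    simp only [Matrix.conjTranspose_apply, star_trivial]
    refine tendsto_nhds_unique ?_ (hST t₀ i j)
    have := hST t₀ j i
    simpa [mul_comm] using this
  set a : ℕ → ℝ := fun m => t₀ + m * T₀ with ha
  have ha1 : ∀ m : ℕ, a m + T₀ = a (m + 1) := by
    intro m; simp only [ha]; push_cast; ring
  -- key quadratic form bound
  have key : ∀ x : Fin n → ℝ, αl * dotProduct x x ≤ dotProduct x (Λ *ᵥ x) := by
    intro x
    set W : ℕ → Matrix (Fin n) (Fin n) ℝ :=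
      fun m => Matrix.of fun i j => (1 / T₀) * ∫ τ in (a m)..(a m + T₀), φ τ i * φ τ j with hW
    have hwin : ∀ m : ℕ, αl * dotProduct x x ≤ dotProduct x (W m *ᵥ x) := by
      intro m
      have ht : t₀ ≤ a m := le_add_of_nonneg_right (by positivity)
      have h := (posSemidef_iff_dotProduct_mulVec.mp (hPE (a m) ht).2).2 x
      simp only [star_trivial, Matrix.sub_mulVec, dotProduct_sub,
        Matrix.smul_mulVec, Matrix.one_mulVec, dotProduct_smul,
        smul_eq_mul, sub_nonneg] at h
      exact h
    -- g tends to the quadratic form of Λ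
    set g : ℝ → ℝ := fun T =>
      ∑ i, ∑ j, x i * ((1 / T) * ∫ τ in t₀..(t₀ + T), φ τ i * φ τ j) * x j with hg
    have hTend : Tendsto g atTop (nhds (∑ i, ∑ j, x i * Λ i j * x j)) := by
      apply tendsto_finset_sum
      intro i _
      apply tendsto_finset_sum
      intro j _
      exact ((hST t₀ i j).const_mul (x i)).mul_const (x j)
    have hseq : Tendsto (fun k : ℕ => (k : ℝ) * T₀) atTop atTop :=
      tendsto_natCast_atTop_atTop.atTop_mul_const hT₀
    -- value of g at k * T₀
    have hval : ∀ k : ℕ, 1 ≤ k → αl * dotProduct x x ≤ g ((k : ℝ) * T₀) := by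
      intro k hk
      have hk0 : (0 : ℝ) < (k : ℝ) := by exact_mod_cast hk
      have hsplit : ∀ i j : Fin n,
          (∫ τ in t₀..(t₀ + (k : ℝ) * T₀), φ τ i * φ τ j)
            = ∑ m ∈ Finset.range k, ∫ τ in (a m)..(a m + T₀), φ τ i * φ τ j := by
        intro i j
        have := intervalIntegral.sum_integral_adjacent_intervals
          (a := a) (n := k) (f := fun τ => φ τ i * φ τ j)
          (fun m _ => hInt i j _ _)
        simp only [ha1]
        rw [this]
        simp [ha]
      have hT0 : T₀ ≠ 0 := ne_of_gt hT₀
      have hk0' : (k : ℝ) ≠ 0 := ne_of_gt hk0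
      have h1 : ∀ i j : Fin n,
          x i * ((1 / ((k : ℝ) * T₀)) * ∫ τ in t₀..(t₀ + (k : ℝ) * T₀), φ τ i * φ τ j) * x j
            = ∑ m ∈ Finset.range k, (1 / (k : ℝ)) *
                (x i * ((1 / T₀) * ∫ τ in (a m)..(a m + T₀), φ τ i * φ τ j) * x j) := by
        intro i j
        rw [hsplit i j, Finset.mul_sum, Finset.mul_sum, Finset.sum_mul]
        refine Finset.sum_congr rfl fun m _ => ?_
        field_simp
      have heq : g ((k : ℝ) * T₀)
          = (1 / (k : ℝ)) * ∑ m ∈ Finset.range k, dotProduct x (W m *ᵥ x) := by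
        simp only [hg, qf_eq, hW, Matrix.of_apply, h1, Finset.mul_sum]
        exact sum_comm3 _
      rw [heq]
      have hsum : (k : ℝ) * (αl * dotProduct x x)
          ≤ ∑ m ∈ Finset.range k, dotProduct x (W m *ᵥ x) := by
        calc (k : ℝ) * (αl * dotProduct x x)
            = ∑ _m ∈ Finset.range k, αl * dotProduct x x := by
              rw [Finset.sum_const, Finset.card_range, nsmul_eq_mul]
          _ ≤ _ := Finset.sum_le_sum fun m _ => hwin m
      have h2 : αl * dotProduct x x
          = (1 / (k : ℝ)) * ((k : ℝ) * (αl * dotProduct x x)) := by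
        field_simp
      rw [h2]
      exact mul_le_mul_of_nonneg_left hsum (by positivity)
    have hge : αl * dotProduct x x ≤ ∑ i, ∑ j, x i * Λ i j * x j := by
      refine ge_of_tendsto (hTend.comp hseq) ?_
      filter_upwards [eventually_ge_atTop 1] with k hk
      exact hval k hk
    rw [qf_eq]
    exact hge
  constructor
  · have hH0 : (αl • (1 : Matrix (Fin n) (Fin n) ℝ)).IsHermitian := by
      simp [Matrix.IsHermitian, Matrix.conjTranspose_smul]
    refine posSemidef_iff_dotProduct_mulVec.mpr ⟨hsym.sub hH0, fun x => ?_⟩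
    simp only [star_trivial, Matrix.sub_mulVec, dotProduct_sub,
      Matrix.smul_mulVec, Matrix.one_mulVec, dotProduct_smul,
      smul_eq_mul, sub_nonneg]
    exact key x
  · refine posDef_iff_dotProduct_mulVec.mpr ⟨hsym, fun x hx => ?_⟩
    have h1 : 0 < dotProduct x x := by
      have := Matrix.dotProduct_star_self_pos_iff (v := x)
      simpa [star_trivial] using this.mpr hx
    simp only [star_trivial]
    calc (0:ℝ) < αl * dotProduct x x := by positivity
      _ ≤ dotProduct x (Λ *ᵥ x) := key x
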